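/- arXiv:1109.3226 — 2 statements merged into one kernel-verified Lean document; each statement's English description precedes it below -/
import Mathlib

section
/- Let K be a field of characteristic 0, a, b, c ∈ K with disc(x³ + ax² + bx + c) = 0. Let A(x) = x⁴ − 2bx² − 8cx + b² − 4ac and B(x) = 4x³ + 4ax² + 4bx + 4c. Then A and B have a common root in an algebraic closure of K. -/
/-!
Writing `f = x³ + ax² + bx + c`, the Lattès numerator and denominator are
`A = f'² - 4(a + 2x) f` and `B = 4f`, so every repeated root of `f` is a common root of `A`
and `B`; and `f` has a repeated root in the algebraic closure exactly when its discriminant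
vanishes.
-/

open Polynomial

theorem Cubic.exists_isRoot_derivative_of_discr_eq_zero {K L : Type*} [Field K] [Field L]
    {P : Cubic K} (φ : K →+* L) (ha : P.a ≠ 0) (hP : (P.toPoly.map φ).Splits)
    (hd : P.discr = 0) :
    ∃ r, (P.toPoly.map φ).IsRoot r ∧ (derivative (P.toPoly.map φ)).IsRoot r := by
  have hdup : ¬ (P.toPoly.map φ).roots.Nodup := by
    rwa [← Cubic.map_roots, ← Cubic.discr_ne_zero_iff_roots_nodup ha hP, not_not]
  classical
  obtain ⟨r, hr⟩ : ∃ r, 1 < (P.toPoly.map φ).roots.count r := by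
    simpa [Multiset.nodup_iff_count_le_one] using hdup
  rw [count_roots] at hr
  exact ⟨r, (one_lt_rootMultiplicity_iff_isRoot
    (map_ne_zero (Cubic.ne_zero_of_a_ne_zero ha))).mp hr⟩

theorem Cubic.toPoly_one {R : Type*} [CommRing R] (a b c : R) :
    (⟨1, a, b, c⟩ : Cubic R).toPoly = X ^ 3 + C a * X ^ 2 + C b * X + C c := by
  simp [Cubic.toPoly]

-- `A / B` is the duplication formula `x(2P) = f'(x)² / 4f(x) - a - 2x(P)`.
theorem lattes_num_eq {R : Type*} [CommRing R] (a b c : R) :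
    X ^ 4 - C (2 * b) * X ^ 2 - C (8 * c) * X + C (b ^ 2 - 4 * a * c) =
      derivative (⟨1, a, b, c⟩ : Cubic R).toPoly ^ 2 -
        C 4 * (C a + 2 * X) * (⟨1, a, b, c⟩ : Cubic R).toPoly := by
  rw [Cubic.toPoly_one]
  simp only [derivative_add, derivative_X_pow, derivative_C_mul_X_pow, derivative_C_mul_X,
    derivative_C, map_mul, map_sub, map_pow, map_ofNat]
  push_cast
  simp only [C_ofNat]
  ring

theorem lattes_den_eq {R : Type*} [CommRing R] (a b c : R) :
    C 4 * X ^ 3 + C (4 * a) * X ^ 2 + C (4 * b) * X + C (4 * c) =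
      C 4 * (⟨1, a, b, c⟩ : Cubic R).toPoly := by
  rw [Cubic.toPoly_one]
  simp only [map_mul]
  ring

theorem lattes_common_root_of_disc_zero_general (K : Type*) [Field K]
    (a b c : K)
    (hdisc : a ^ 2 * b ^ 2 + 18 * a * b * c - 4 * a ^ 3 * c - 4 * b ^ 3 - 27 * c ^ 2 = 0)
    (A B : Polynomial K)
    (hA : A = X ^ 4 - C (2 * b) * X ^ 2 - C (8 * c) * X + C (b ^ 2 - 4 * a * c))
    (hB : B = C 4 * X ^ 3 + C (4 * a) * X ^ 2 + C (4 * b) * X + C (4 * c)) :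
    ∃ r : AlgebraicClosure K, aeval r A = 0 ∧ aeval r B = 0 := by
  set f := (⟨1, a, b, c⟩ : Cubic K)
  have hd : f.discr = 0 := by
    simp only [f, Cubic.discr]
    linear_combination hdisc
  obtain ⟨r, hf, hf'⟩ := f.exists_isRoot_derivative_of_discr_eq_zero
    (algebraMap K (AlgebraicClosure K)) one_ne_zero (IsAlgClosed.splits _) hd
  rw [derivative_map] at hf'
  rw [IsRoot, eval_map_algebraMap] at hf hf'
  refine ⟨r, ?_, ?_⟩
  · rw [hA, lattes_num_eq, map_sub, map_mul, map_pow, hf, hf']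
    ring
  · rw [hB, lattes_den_eq, map_mul, hf, mul_zero]

/-- If the discriminant `a²b² + 18abc − 4a³c − 4b³ − 27c²` of `x³ + ax² + bx + c`
vanishes, then the Lattès numerator `A = x⁴ − 2bx² − 8cx + b² − 4ac` and denominator
`B = 4x³ + 4ax² + 4bx + 4c` have a common root in an algebraic closure of `K`. -/
theorem lattes_common_root_of_disc_zero (K : Type*) [Field K] [CharZero K]
    (a b c : K)
    (hdisc : a ^ 2 * b ^ 2 + 18 * a * b * c - 4 * a ^ 3 * c - 4 * b ^ 3 - 27 * c ^ 2 = 0)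
    (A B : Polynomial K)
    (hA : A = X ^ 4 - C (2 * b) * X ^ 2 - C (8 * c) * X + C (b ^ 2 - 4 * a * c))
    (hB : B = C 4 * X ^ 3 + C (4 * a) * X ^ 2 + C (4 * b) * X + C (4 * c)) :
    ∃ r : AlgebraicClosure K, aeval r A = 0 ∧ aeval r B = 0 :=
  lattes_common_root_of_disc_zero_general K a b c hdisc A B hA hB
end

section
/- Over the polynomial ring ℚ[a,b,c], let f(x) = x³ + ax² + bx + c, A(x) = x⁴ − 2bx² − 8cx + b² − 4ac, B(x) = 4x³ + 4ax² + 4bx + 4c, and W(x) = B(x)A'(x) − A(x)B'(x). Then disc(W) = −2³⁸ · disc(f)⁵, where disc(f) = a²b² + 18abc − 4a³c − 4b³ − 27c². -/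
open Polynomial


/-- The discriminant of a polynomial `P` of degree `N` with leading coefficient `a` and
roots `r₁, …, r_N` in an algebraic closure: `disc P = a^(2N−2) ∏_{m<n} (r_m − r_n)²`,
computed in the algebraic closure (each unordered pair `{s, t}` of roots contributes
`(s − t)² = (s + t)² − 4st`). -/
noncomputable def polyDisc {K : Type*} [Field K] (P : Polynomial K) :
    AlgebraicClosure K :=
  algebraMap K (AlgebraicClosure K) P.leadingCoeff ^ (2 * P.natDegree - 2) *
    (((P.map (algebraMap K (AlgebraicClosure K))).roots.powersetCard 2).map
      fun t => t.sum ^ 2 - 4 * t.prod).prod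

/-!
Split `f = (x - e₁)(x - e₂)(x - e₃)` over the algebraic closure. Then
`W = 4 ∏ᵢ ((x - eᵢ)² - f'(eᵢ))`, so the roots of `W` are `eᵢ ± uᵢ` with `uᵢ² = f'(eᵢ)`.
Within a pair the squared difference is `4uᵢ²`; across two pairs the four differences
`eᵢ - eⱼ ± uᵢ ± uⱼ` multiply to `-4uᵢ²uⱼ²`, because `f'(eᵢ) + f'(eⱼ) = (eᵢ - eⱼ)²`.
Hence `∏ (r - r')² = 2¹⁸ (u₁u₂u₃)¹⁰ = 2¹⁸ (f'(e₁)f'(e₂)f'(e₃))⁵ = -2¹⁸ disc(f)⁵`, and the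
leading coefficient `4` of `W` contributes the remaining `4¹⁰`.
-/

section SqDiffProd

variable {R : Type*} [CommRing R]

def sqDiffProd (M : Multiset R) : R :=
  ((M.powersetCard 2).map fun t => t.sum ^ 2 - 4 * t.prod).prod

def crossSqDiffProd (s t : Multiset R) : R :=
  (s.map fun x => (t.map fun y => (x - y) ^ 2).prod).prod

@[simp]
theorem sqDiffProd_zero : sqDiffProd (0 : Multiset R) = 1 := rfl

theorem sqDiffProd_cons (a : R) (s : Multiset R) :
    sqDiffProd (a ::ₘ s) = sqDiffProd s * (s.map fun r => (a - r) ^ 2).prod := by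
  simp only [sqDiffProd, Multiset.powersetCard_cons, Multiset.powersetCard_one, Multiset.map_add,
    Multiset.prod_add, Multiset.map_map]
  congr 2
  refine Multiset.map_congr rfl fun r _ => ?_
  simp only [Function.comp_apply, Multiset.sum_cons, Multiset.sum_singleton,
    Multiset.prod_cons, Multiset.prod_singleton]
  ring

theorem sqDiffProd_add (s t : Multiset R) :
    sqDiffProd (s + t) = sqDiffProd s * sqDiffProd t * crossSqDiffProd s t := by
  induction s using Multiset.induction_on with
  | empty => simp [crossSqDiffProd]
  | cons a s ih =>
    rw [Multiset.cons_add, sqDiffProd_cons, sqDiffProd_cons, ih, Multiset.map_add,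
      Multiset.prod_add]
    simp only [crossSqDiffProd, Multiset.map_cons, Multiset.prod_cons]
    ring

theorem crossSqDiffProd_add_left (s t r : Multiset R) :
    crossSqDiffProd (s + t) r = crossSqDiffProd s r * crossSqDiffProd t r := by
  simp only [crossSqDiffProd, Multiset.map_add, Multiset.prod_add]

def pmPair (e u : R) : Multiset R := {e + u, e - u}

@[simp]
theorem card_pmPair (e u : R) : Multiset.card (pmPair e u) = 2 := rfl

theorem sqDiffProd_pmPair (e u : R) : sqDiffProd (pmPair e u) = 4 * u ^ 2 := by
  simp only [pmPair, Multiset.insert_eq_cons, ← Multiset.cons_zero, sqDiffProd_cons,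
    sqDiffProd_zero, Multiset.map_cons, Multiset.map_zero, Multiset.prod_cons,
    Multiset.prod_zero]
  ring

theorem crossSqDiffProd_pmPair (e f u v : R) (h : (e - f) ^ 2 = u ^ 2 + v ^ 2) :
    crossSqDiffProd (pmPair e u) (pmPair f v) = (4 * u ^ 2 * v ^ 2) ^ 2 := by
  have hdiff : (e + u - (f + v)) * (e + u - (f - v)) * (e - u - (f + v)) * (e - u - (f - v)) =
      -(4 * u ^ 2 * v ^ 2) := by
    linear_combination ((e - f) ^ 2 - u ^ 2 - v ^ 2) * h
  simp only [crossSqDiffProd, pmPair, Multiset.insert_eq_cons, Multiset.map_cons,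
    Multiset.map_singleton, Multiset.prod_cons, Multiset.prod_singleton]
  rw [show ∀ x y z w : R, x ^ 2 * y ^ 2 * (z ^ 2 * w ^ 2) = (x * y * z * w) ^ 2 from
    fun _ _ _ _ => by ring, hdiff]
  ring

theorem sqDiffProd_three_pmPairs (e₁ e₂ e₃ u₁ u₂ u₃ : R)
    (h₁₂ : (e₁ - e₂) ^ 2 = u₁ ^ 2 + u₂ ^ 2) (h₁₃ : (e₁ - e₃) ^ 2 = u₁ ^ 2 + u₃ ^ 2)
    (h₂₃ : (e₂ - e₃) ^ 2 = u₂ ^ 2 + u₃ ^ 2) :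
    sqDiffProd (pmPair e₁ u₁ + pmPair e₂ u₂ + pmPair e₃ u₃) = 2 ^ 18 * (u₁ * u₂ * u₃) ^ 10 := by
  rw [sqDiffProd_add, sqDiffProd_add, crossSqDiffProd_add_left, sqDiffProd_pmPair,
    sqDiffProd_pmPair, sqDiffProd_pmPair, crossSqDiffProd_pmPair _ _ _ _ h₁₂,
    crossSqDiffProd_pmPair _ _ _ _ h₁₃, crossSqDiffProd_pmPair _ _ _ _ h₂₃]
  ring

theorem prod_map_X_sub_C_pmPair (e u : R) :
    ((pmPair e u).map (X - C ·)).prod = (X - C e) ^ 2 - C (u ^ 2) := by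
  simp only [pmPair, Multiset.insert_eq_cons, Multiset.map_cons, Multiset.map_singleton,
    Multiset.prod_cons, Multiset.prod_singleton, C_add, C_sub, C_pow]
  ring

end SqDiffProd

theorem polyDisc_eq_of_map_eq {K : Type*} [Field K] {P : K[X]} {l : K} (hl : l ≠ 0)
    {M : Multiset (AlgebraicClosure K)}
    (hP : P.map (algebraMap K _) = C (algebraMap K _ l) * (M.map (X - C ·)).prod) :
    polyDisc P = algebraMap K _ l ^ (2 * Multiset.card M - 2) * sqDiffProd M := by
  set φ := algebraMap K (AlgebraicClosure K)
  have hl' : φ l ≠ 0 := (map_ne_zero φ).2 hl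
  have hmonic : (M.map (X - C ·)).prod.Monic :=
    monic_multiset_prod_of_monic _ _ fun r _ => monic_X_sub_C r
  have hlc : P.leadingCoeff = l := φ.injective <| by
    rw [← leadingCoeff_map, hP, leadingCoeff_mul, leadingCoeff_C, hmonic.leadingCoeff, mul_one]
  have hdeg : P.natDegree = Multiset.card M := by
    rw [← natDegree_map φ, hP, natDegree_C_mul hl', natDegree_multiset_prod_X_sub_C_eq_card]
  have hroots : (P.map φ).roots = M := by
    rw [hP, roots_C_mul _ hl', roots_multiset_prod_X_sub_C]
  rw [polyDisc, hlc, hdeg, hroots, sqDiffProd]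

theorem exists_cubic_vieta {k : Type*} [Field k] [IsAlgClosed k] (a b c : k) :
    ∃ e₁ e₂ e₃ : k, a = -(e₁ + e₂ + e₃) ∧ b = e₁ * e₂ + e₁ * e₃ + e₂ * e₃ ∧
      c = -(e₁ * e₂ * e₃) := by
  obtain ⟨e₁, h₁⟩ := IsAlgClosed.exists_root (X ^ 3 + C a * X ^ 2 + C b * X + C c)
    (ne_of_eq_of_ne (b := 3) (by compute_degree!) (by decide))
  obtain ⟨e₂, h₂⟩ := IsAlgClosed.exists_root (X ^ 2 + C (a + e₁) * X + C (b + a * e₁ + e₁ ^ 2))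
    (ne_of_eq_of_ne (b := 2) (by compute_degree!) (by decide))
  simp only [IsRoot, eval_add, eval_mul, eval_pow, eval_X, eval_C] at h₁ h₂
  exact ⟨e₁, e₂, -(a + e₁) - e₂, by ring, by linear_combination h₂,
    by linear_combination h₁ - e₁ * h₂⟩

section Lattes

variable {R S : Type*} [CommRing R] [CommRing S]

noncomputable def lattesA (a b c : R) : R[X] :=
  X ^ 4 - C (2 * b) * X ^ 2 - C (8 * c) * X + C (b ^ 2 - 4 * a * c)

noncomputable def lattesB (a b c : R) : R[X] :=
  C 4 * X ^ 3 + C (4 * a) * X ^ 2 + C (4 * b) * X + C (4 * c)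

noncomputable def lattesW (a b c : R) : R[X] :=
  lattesB a b c * derivative (lattesA a b c) - lattesA a b c * derivative (lattesB a b c)

theorem map_lattesW (φ : R →+* S) (a b c : R) :
    (lattesW a b c).map φ = lattesW (φ a) (φ b) (φ c) := by
  simp only [lattesW, Polynomial.map_sub, Polynomial.map_mul, ← derivative_map]
  simp [lattesA, lattesB, map_ofNat φ]

theorem lattesW_vieta (e₁ e₂ e₃ : R) :
    lattesW (-(e₁ + e₂ + e₃)) (e₁ * e₂ + e₁ * e₃ + e₂ * e₃) (-(e₁ * e₂ * e₃)) =
      C 4 * (((X - C e₁) ^ 2 - C ((e₁ - e₂) * (e₁ - e₃))) *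
        ((X - C e₂) ^ 2 - C ((e₂ - e₁) * (e₂ - e₃))) *
        ((X - C e₃) ^ 2 - C ((e₃ - e₁) * (e₃ - e₂)))) := by
  simp only [lattesW, lattesA, lattesB, derivative_add, derivative_sub, derivative_C_mul_X_pow,
    derivative_C_mul_X, derivative_X_pow, derivative_C]
  simp only [C_add, C_sub, C_mul, C_neg, C_pow, C_ofNat, map_natCast]
  ring

theorem lattesW_vieta_eq_C_mul_prod (e₁ e₂ e₃ u₁ u₂ u₃ : R) (hu₁ : u₁ ^ 2 = (e₁ - e₂) * (e₁ - e₃))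
    (hu₂ : u₂ ^ 2 = (e₂ - e₁) * (e₂ - e₃)) (hu₃ : u₃ ^ 2 = (e₃ - e₁) * (e₃ - e₂)) :
    lattesW (-(e₁ + e₂ + e₃)) (e₁ * e₂ + e₁ * e₃ + e₂ * e₃) (-(e₁ * e₂ * e₃)) =
      C 4 * ((pmPair e₁ u₁ + pmPair e₂ u₂ + pmPair e₃ u₃).map (X - C ·)).prod := by
  rw [lattesW_vieta, Multiset.map_add, Multiset.map_add, Multiset.prod_add, Multiset.prod_add,
    prod_map_X_sub_C_pmPair, prod_map_X_sub_C_pmPair, prod_map_X_sub_C_pmPair, hu₁, hu₂, hu₃]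

end Lattes

theorem polyDisc_lattesW {K : Type*} [Field K] (h4 : (4 : K) ≠ 0) (a b c : K) :
    polyDisc (lattesW a b c) = algebraMap K (AlgebraicClosure K)
      (-(2 ^ 38) * (a ^ 2 * b ^ 2 + 18 * a * b * c - 4 * a ^ 3 * c - 4 * b ^ 3 - 27 * c ^ 2) ^ 5) := by
  set φ := algebraMap K (AlgebraicClosure K)
  obtain ⟨e₁, e₂, e₃, ha, hb, hc⟩ := exists_cubic_vieta (φ a) (φ b) (φ c)
  obtain ⟨u₁, hu₁⟩ := IsAlgClosed.exists_pow_nat_eq ((e₁ - e₂) * (e₁ - e₃)) two_pos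
  obtain ⟨u₂, hu₂⟩ := IsAlgClosed.exists_pow_nat_eq ((e₂ - e₁) * (e₂ - e₃)) two_pos
  obtain ⟨u₃, hu₃⟩ := IsAlgClosed.exists_pow_nat_eq ((e₃ - e₁) * (e₃ - e₂)) two_pos
  obtain ⟨Δ, hΔ⟩ : ∃ Δ, Δ = (e₁ - e₂) * (e₁ - e₃) * (e₂ - e₃) := ⟨_, rfl⟩
  have hdisc : φ (a ^ 2 * b ^ 2 + 18 * a * b * c - 4 * a ^ 3 * c - 4 * b ^ 3 - 27 * c ^ 2) =
      Δ ^ 2 := by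
    simp only [map_add, map_sub, map_mul, map_pow, map_ofNat, ha, hb, hc, hΔ]
    ring
  have hu : (u₁ * u₂ * u₃) ^ 2 = -Δ ^ 2 := by
    rw [hΔ]
    linear_combination (u₂ ^ 2 * u₃ ^ 2) * hu₁ + ((e₁ - e₂) * (e₁ - e₃) * u₃ ^ 2) * hu₂ +
      ((e₁ - e₂) * (e₁ - e₃) * (e₂ - e₁) * (e₂ - e₃)) * hu₃
  have hWmap : (lattesW a b c).map φ =
      C (φ 4) * ((pmPair e₁ u₁ + pmPair e₂ u₂ + pmPair e₃ u₃).map (X - C ·)).prod := by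
    rw [map_lattesW, ha, hb, hc, lattesW_vieta_eq_C_mul_prod _ _ _ _ _ _ hu₁ hu₂ hu₃, map_ofNat φ]
  rw [polyDisc_eq_of_map_eq h4 hWmap, sqDiffProd_three_pmPairs _ _ _ _ _ _
    (by linear_combination -hu₁ - hu₂) (by linear_combination -hu₁ - hu₃)
    (by linear_combination -hu₂ - hu₃)]
  simp only [map_mul, map_neg, map_pow, map_ofNat, hdisc, Multiset.card_add, card_pmPair]
  rw [show (u₁ * u₂ * u₃) ^ 10 = ((u₁ * u₂ * u₃) ^ 2) ^ 5 by ring, hu]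
  ring

theorem lattes_disc_identity_general
    (a b c : FractionRing (MvPolynomial (Fin 3) ℚ))
    (A B W : Polynomial (FractionRing (MvPolynomial (Fin 3) ℚ)))
    (hA : A = X ^ 4 - C (2 * b) * X ^ 2 - C (8 * c) * X + C (b ^ 2 - 4 * a * c))
    (hB : B = C 4 * X ^ 3 + C (4 * a) * X ^ 2 + C (4 * b) * X + C (4 * c))
    (hW : W = B * derivative A - A * derivative B) :
    polyDisc W
      = algebraMap _ (AlgebraicClosure (FractionRing (MvPolynomial (Fin 3) ℚ)))
          (-(2 ^ 38) *
            (a ^ 2 * b ^ 2 + 18 * a * b * c - 4 * a ^ 3 * c - 4 * b ^ 3 - 27 * c ^ 2) ^ 5) := by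
  subst hA hB hW
  exact polyDisc_lattesW (by norm_num) a b c

/-- Over `ℚ[a,b,c]` (viewed inside its fraction field, with `a, b, c` the three
indeterminates), let `f = x³ + ax² + bx + c`, `A = x⁴ − 2bx² − 8cx + b² − 4ac`,
`B = 4x³ + 4ax² + 4bx + 4c`, and `W = B·A' − A·B'`.  Then
`disc(W) = −2³⁸ · disc(f)⁵`, where `disc(f) = a²b² + 18abc − 4a³c − 4b³ − 27c²`. -/
theorem lattes_disc_identity
    (a b c : FractionRing (MvPolynomial (Fin 3) ℚ))
    (ha : a = algebraMap (MvPolynomial (Fin 3) ℚ) _ (MvPolynomial.X 0))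
    (hb : b = algebraMap (MvPolynomial (Fin 3) ℚ) _ (MvPolynomial.X 1))
    (hc : c = algebraMap (MvPolynomial (Fin 3) ℚ) _ (MvPolynomial.X 2))
    (A B W : Polynomial (FractionRing (MvPolynomial (Fin 3) ℚ)))
    (hA : A = X ^ 4 - C (2 * b) * X ^ 2 - C (8 * c) * X + C (b ^ 2 - 4 * a * c))
    (hB : B = C 4 * X ^ 3 + C (4 * a) * X ^ 2 + C (4 * b) * X + C (4 * c))
    (hW : W = B * derivative A - A * derivative B) :
    polyDisc W
      = algebraMap _ (AlgebraicClosure (FractionRing (MvPolynomial (Fin 3) ℚ)))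
          (-(2 ^ 38) *
            (a ^ 2 * b ^ 2 + 18 * a * b * c - 4 * a ^ 3 * c - 4 * b ^ 3 - 27 * c ^ 2) ^ 5) :=
  lattes_disc_identity_general a b c A B W hA hB hW
end
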